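/- arXiv:2112.07717 — 3 statements merged into one kernel-verified Lean document; each statement's English description precedes it below -/
import Mathlib

section
/- Assume all parameters are positive and c₁ = (b+γ) + (s_M/μ_M)(N₃ β + η) − δ > 0 (which holds in particular when δ < (N₃ β + η) s_M/μ_M). Then every complex eigenvalue of the Jacobian matrix J of the in-host TB system at the infection-free steady state has strictly negative real part if and only if δ < δ₀, where δ₀ = (s_M/μ_M)[η − β((N₂−N₃)γ + (N₁−N₃)b)/(b+γ)]. -/
open Matrix

set_option maxHeartbeats 1000000

/-- Assuming c₁ > 0, every complex eigenvalue of the Jacobian J at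
the infection-free steady state has strictly negative real part iff δ < δ₀. -/
theorem infection_free_linear_stability_iff
    (sM μM β b γ δ N₁ N₂ N₃ η sT cM eM cB eB μT : ℝ)
    (hsM : 0 < sM) (hμM : 0 < μM) (hβ : 0 < β) (hb : 0 < b) (hγ : 0 < γ)
    (hδ : 0 < δ) (hN₁ : 0 < N₁) (hN₂ : 0 < N₂) (hN₃ : 0 < N₃) (hη : 0 < η)
    (hsT : 0 < sT) (hcM : 0 < cM) (heM : 0 < eM) (hcB : 0 < cB) (heB : 0 < eB)
    (hμT : 0 < μT)
    (Tbar : ℝ) (hTbar : Tbar = sT / μT)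
    (J : Matrix (Fin 4) (Fin 4) ℝ)
    (hJ : J = !![-μM, 0, -β * sM / μM, 0;
                 0, -(b + γ), β * sM / μM, 0;
                 0, N₁ * b + N₂ * γ, δ - (sM / μM) * (η + N₃ * β), 0;
                 0, cM * Tbar / (eM * Tbar + 1), cB * Tbar / (eB * Tbar + 1), -μT])
    (c₁ δ₀ : ℝ)
    (hc₁ : c₁ = (b + γ) + (sM / μM) * (N₃ * β + η) - δ)
    (hc₁pos : 0 < c₁)
    (hδ₀ : δ₀ = (sM / μM) * (η - β * ((N₂ - N₃) * γ + (N₁ - N₃) * b) / (b + γ))) :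
    (∀ z ∈ spectrum ℂ (J.map (Complex.ofReal)), z.re < 0) ↔ δ < δ₀ := by
  set c₂ : ℝ := (b + γ) * (δ₀ - δ) with hc₂
  have hbγ : (0:ℝ) < b + γ := by linarith
  have hμM' : (μM:ℝ) ≠ 0 := ne_of_gt hμM
  -- key: characterize spectrum
  have hspec : ∀ z : ℂ, z ∈ spectrum ℂ (J.map (Complex.ofReal)) ↔
      (z + μM) * (z + μT) * (z ^ 2 + c₁ * z + c₂) = 0 := by
    intro z
    rw [spectrum.mem_iff, Matrix.isUnit_iff_isUnit_det, isUnit_iff_ne_zero, not_ne_iff]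
    have hM : algebraMap ℂ (Matrix (Fin 4) (Fin 4) ℂ) z - J.map Complex.ofReal =
        !![z + μM, 0, (β * sM / μM : ℝ), 0;
           0, z + ((b + γ : ℝ):ℂ), -((β * sM / μM : ℝ):ℂ), 0;
           0, -((N₁ * b + N₂ * γ : ℝ):ℂ), z - ((δ - (sM / μM) * (η + N₃ * β) : ℝ):ℂ), 0;
           0, -((cM * Tbar / (eM * Tbar + 1) : ℝ):ℂ), -((cB * Tbar / (eB * Tbar + 1) : ℝ):ℂ),
             z + μT] := by
      subst hJ
      ext i j
      fin_cases i <;> fin_cases j <;>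
        simp [Matrix.algebraMap_matrix_apply, Matrix.map_apply, Matrix.vecHead,
          Matrix.vecTail] <;> push_cast <;> ring
    rw [hM]
    have hbγ' : ((b:ℂ) + γ) ≠ 0 := by
      exact_mod_cast (ne_of_gt (show (0:ℝ) < b + γ from hbγ))
    have hμMc : (μM:ℂ) ≠ 0 := by exact_mod_cast hμM'
    have hdet : (!![z + (μM:ℂ), 0, ((β * sM / μM : ℝ):ℂ), 0;
           0, z + ((b + γ : ℝ):ℂ), -((β * sM / μM : ℝ):ℂ), 0;
           0, -((N₁ * b + N₂ * γ : ℝ):ℂ), z - ((δ - (sM / μM) * (η + N₃ * β) : ℝ):ℂ), 0;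
           0, -((cM * Tbar / (eM * Tbar + 1) : ℝ):ℂ), -((cB * Tbar / (eB * Tbar + 1) : ℝ):ℂ),
             z + (μT:ℂ)]).det = (z + μM) * (z + μT) * (z ^ 2 + c₁ * z + c₂) := by
      simp [Matrix.det_succ_row_zero, Fin.sum_univ_succ]
      push_cast [hc₁, hc₂, hδ₀]
      field_simp
      ring
    rw [hdet]
  constructor
  · intro h
    by_contra hle
    push_neg at hle
    have hc₂le : c₂ ≤ 0 := by
      rw [hc₂]; nlinarith
    have hd : 0 ≤ c₁ ^ 2 - 4 * c₂ := by nlinarith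
    set s := Real.sqrt (c₁ ^ 2 - 4 * c₂) with hs
    have hs2 : s ^ 2 = c₁ ^ 2 - 4 * c₂ := Real.sq_sqrt hd
    have hsge : c₁ ≤ s := by
      have : Real.sqrt (c₁ ^ 2) ≤ s := Real.sqrt_le_sqrt (by nlinarith)
      rwa [Real.sqrt_sq hc₁pos.le] at this
    set r : ℝ := (-c₁ + s) / 2 with hr
    have hroot : r ^ 2 + c₁ * r + c₂ = 0 := by
      rw [hr]; linear_combination hs2 / 4
    have hrge : 0 ≤ r := by rw [hr]; linarith
    have hmem : (r : ℂ) ∈ spectrum ℂ (J.map (Complex.ofReal)) := by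
      rw [hspec]
      have : ((r : ℂ) ^ 2 + c₁ * r + c₂) = ((r ^ 2 + c₁ * r + c₂ : ℝ) : ℂ) := by push_cast; ring
      rw [this, hroot]
      simp
    have := h _ hmem
    simp only [Complex.ofReal_re] at this
    linarith
  · intro hlt z hz
    have hc₂pos : 0 < c₂ := by rw [hc₂]; nlinarith
    rw [hspec] at hz
    rcases mul_eq_zero.mp hz with h1 | h2
    · rcases mul_eq_zero.mp h1 with ha | hb'
      · have : z = -(μM:ℂ) := by linear_combination ha
        rw [this]; simpa using hμM
      · have : z = -(μT:ℂ) := by linear_combination hb'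
        rw [this]; simpa using hμT
    · by_contra hre
      push_neg at hre
      set x := z.re with hx
      set y := z.im with hy
      have him : y * (2 * x + c₁) = 0 := by
        have := congrArg Complex.im h2
        simp [Complex.add_im, Complex.mul_im, Complex.mul_re, pow_two] at this
        linarith [this]
      have hxc : 0 < 2 * x + c₁ := by linarith
      have hy0 : y = 0 := by
        rcases mul_eq_zero.mp him with h | h
        · exact h
        · linarith
      have hrep : x ^ 2 - y ^ 2 + c₁ * x + c₂ = 0 := by
        have := congrArg Complex.re h2
        simp [Complex.add_re, Complex.mul_re, Complex.mul_im, pow_two] at this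
        nlinarith [this]
      rw [hy0] at hrep
      nlinarith
end

section
/- Assume all parameters are positive and δ > δ₀, where δ₀ = (s_M/μ_M)[η − β((N₂−N₃)γ + (N₁−N₃)b)/(b+γ)]. Then the Jacobian matrix J of the in-host TB system at the infection-free steady state has a real eigenvalue λ₁ = −c₁/2 + (1/2)√(c₁² − 4c₂) > 0, where c₁ = (b+γ) + (s_M/μ_M)(N₃ β + η) − δ and c₂ = (b+γ)(δ₀ − δ) < 0; hence the infection-free steady state is linearly unstable. -/
open Matrix

/-! In the variables `(M, I, B, T)` the infection-free Jacobian only couples `I` and `B`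
among themselves: up to a permutation of coordinates it is block triangular with diagonal
blocks `(-μ_M)`, `(-μ_T)` and the `(I, B)` block, whose characteristic polynomial is
`λ² + c₁ λ + c₂`. Above the threshold `c₂ = (b + γ)(δ₀ - δ) < 0`, so that quadratic has
a positive larger root `λ₁`, which is therefore an eigenvalue of `J`. -/

theorem eval_charpoly_sparse_fin_four {R : Type*} [CommRing R] (a p q r s t u v w x : R) :
    (!![a, 0, p, 0; 0, q, r, 0; 0, s, t, 0; 0, u, v, w] : Matrix (Fin 4) (Fin 4) R).charpoly.eval x
      = (x - a) * (x - w) * ((x - q) * (x - t) - r * s) := by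
  rw [eval_charpoly, det_succ_row_zero]
  simp [Fin.sum_univ_succ, det_succ_row_zero, Fin.succAbove]
  ring

noncomputable def largerRoot (p q : ℝ) : ℝ := -p / 2 + (1 / 2) * Real.sqrt (p ^ 2 - 4 * q)

theorem largerRoot_sq_add {p q : ℝ} (h : 0 ≤ p ^ 2 - 4 * q) :
    largerRoot p q ^ 2 + p * largerRoot p q + q = 0 := by
  unfold largerRoot
  linear_combination (1 / 4 : ℝ) * Real.sq_sqrt h

theorem largerRoot_pos {p q : ℝ} (hq : q < 0) : 0 < largerRoot p q := by
  have hlt : |p| < Real.sqrt (p ^ 2 - 4 * q) := by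
    rw [← Real.sqrt_sq_eq_abs]
    exact Real.sqrt_lt_sqrt (sq_nonneg p) (by linarith)
  unfold largerRoot
  linarith [le_abs_self p]

theorem infection_free_unstable_above_threshold_general
    (sM μM β b γ δ N₁ N₂ N₃ η cM eM cB eB μT : ℝ)
    (hb : 0 < b) (hγ : 0 < γ)
    (Tbar : ℝ)
    (J : Matrix (Fin 4) (Fin 4) ℝ)
    (hJ : J = !![-μM, 0, -β * sM / μM, 0;
                 0, -(b + γ), β * sM / μM, 0;
                 0, N₁ * b + N₂ * γ, δ - (sM / μM) * (η + N₃ * β), 0;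
                 0, cM * Tbar / (eM * Tbar + 1), cB * Tbar / (eB * Tbar + 1), -μT])
    (c₁ c₂ δ₀ : ℝ)
    (hc₁ : c₁ = (b + γ) + (sM / μM) * (N₃ * β + η) - δ)
    (hc₂ : c₂ = (b + γ) * (η * sM / μM
      - (β * sM / μM) * ((N₂ - N₃) * γ + (N₁ - N₃) * b) / (b + γ) - δ))
    (hδ₀ : δ₀ = (sM / μM) * (η - β * ((N₂ - N₃) * γ + (N₁ - N₃) * b) / (b + γ)))
    (hthr : δ₀ < δ)
    (lam₁ : ℝ)
    (hlam₁ : lam₁ = -c₁ / 2 + (1 / 2) * Real.sqrt (c₁ ^ 2 - 4 * c₂)) :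
    c₂ = (b + γ) * (δ₀ - δ) ∧ c₂ < 0 ∧ 0 < lam₁ ∧ lam₁ ∈ spectrum ℝ J := by
  have hbγ : 0 < b + γ := add_pos hb hγ
  have hc₂δ₀ : c₂ = (b + γ) * (δ₀ - δ) := by rw [hc₂, hδ₀]; ring
  have hc₂neg : c₂ < 0 := hc₂δ₀ ▸ mul_neg_of_pos_of_neg hbγ (sub_neg.2 hthr)
  have hlam : lam₁ = largerRoot c₁ c₂ := hlam₁
  have hblock : ∀ x, (x + (b + γ)) * (x - (δ - (sM / μM) * (η + N₃ * β)))
      - (β * sM / μM) * (N₁ * b + N₂ * γ) = x ^ 2 + c₁ * x + c₂ := by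
    intro x
    rw [hc₁, hc₂]
    field_simp
    ring
  refine ⟨hc₂δ₀, hc₂neg, hlam ▸ largerRoot_pos hc₂neg, ?_⟩
  rw [hJ]
  apply mem_spectrum_of_isRoot_charpoly
  rw [Polynomial.IsRoot, eval_charpoly_sparse_fin_four, hlam]
  have hdisc : 0 ≤ c₁ ^ 2 - 4 * c₂ := by nlinarith [sq_nonneg c₁]
  refine mul_eq_zero_of_right _ ?_
  linear_combination hblock (largerRoot c₁ c₂) + largerRoot_sq_add hdisc

/-- If δ > δ₀ then the Jacobian J at the infection-free steady state
has a positive real eigenvalue λ₁ = −c₁/2 + (1/2)√(c₁²−4c₂), with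
c₂ = (b+γ)(δ₀−δ) < 0; hence the infection-free steady state is linearly unstable. -/
theorem infection_free_unstable_above_threshold
    (sM μM β b γ δ N₁ N₂ N₃ η sT cM eM cB eB μT : ℝ)
    (hsM : 0 < sM) (hμM : 0 < μM) (hβ : 0 < β) (hb : 0 < b) (hγ : 0 < γ)
    (hδ : 0 < δ) (hN₁ : 0 < N₁) (hN₂ : 0 < N₂) (hN₃ : 0 < N₃) (hη : 0 < η)
    (hsT : 0 < sT) (hcM : 0 < cM) (heM : 0 < eM) (hcB : 0 < cB) (heB : 0 < eB)
    (hμT : 0 < μT)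
    (Tbar : ℝ) (hTbar : Tbar = sT / μT)
    (J : Matrix (Fin 4) (Fin 4) ℝ)
    (hJ : J = !![-μM, 0, -β * sM / μM, 0;
                 0, -(b + γ), β * sM / μM, 0;
                 0, N₁ * b + N₂ * γ, δ - (sM / μM) * (η + N₃ * β), 0;
                 0, cM * Tbar / (eM * Tbar + 1), cB * Tbar / (eB * Tbar + 1), -μT])
    (c₁ c₂ δ₀ : ℝ)
    (hc₁ : c₁ = (b + γ) + (sM / μM) * (N₃ * β + η) - δ)
    (hc₂ : c₂ = (b + γ) * (η * sM / μM
      - (β * sM / μM) * ((N₂ - N₃) * γ + (N₁ - N₃) * b) / (b + γ) - δ))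
    (hδ₀ : δ₀ = (sM / μM) * (η - β * ((N₂ - N₃) * γ + (N₁ - N₃) * b) / (b + γ)))
    (hthr : δ₀ < δ)
    (lam₁ : ℝ)
    (hlam₁ : lam₁ = -c₁ / 2 + (1 / 2) * Real.sqrt (c₁ ^ 2 - 4 * c₂)) :
    c₂ = (b + γ) * (δ₀ - δ) ∧ c₂ < 0 ∧ 0 < lam₁ ∧ lam₁ ∈ spectrum ℝ J :=
  infection_free_unstable_above_threshold_general sM μM β b γ δ N₁ N₂ N₃ η cM eM cB eB μT hb hγ Tbar
    J hJ c₁ c₂ δ₀ hc₁ hc₂ hδ₀ hthr lam₁ hlam₁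
end

section
/- Assume all parameters are positive, δ = δ₀, and c₁ = (b+γ) + (s_M/μ_M)(N₃ β + η) − δ₀ > 0. Then 0 is an eigenvalue of the Jacobian matrix J of the in-host TB system at the infection-free steady state (a zero-eigenvalue bifurcation occurs), and the remaining three eigenvalues are the negative real numbers −μ_M, −μ_T, and −c₁. -/
open Matrix

/-!
At the infection-free state the first and last columns of `J` vanish off the diagonal, so the
characteristic polynomial splits as `(x + μ_M) (x + μ_T)` times the characteristic polynomial of
the middle `2 × 2` block. That block has trace `-c₁`, and `δ₀` is precisely the value of `δ` at
which its determinant vanishes, so its eigenvalues are `0` and `-c₁`.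
-/

namespace Matrix

theorem spectrum_eq_of_eval_charpoly_eq {K : Type*} [Field K] {n : Type*} [Fintype n]
    [DecidableEq n] (A : Matrix n n K) (a b c d : K)
    (h : ∀ x, A.charpoly.eval x = (x - a) * (x - b) * (x - c) * (x - d)) :
    spectrum K A = {a, b, c, d} := by
  ext x
  rw [mem_spectrum_iff_isRoot_charpoly, Polynomial.IsRoot.def, h]
  simp only [mul_eq_zero, sub_eq_zero, or_assoc, Set.mem_insert_iff, Set.mem_singleton_iff]

theorem eval_charpoly_of_cols_zero_three_diagonal {R : Type*} [CommRing R]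
    (a p q r s t u v w x : R) :
    (!![a, 0, p, 0; 0, q, r, 0; 0, s, t, 0; 0, u, v, w]).charpoly.eval x
      = (x - a) * (x - w) * ((x - q) * (x - t) - r * s) := by
  rw [eval_charpoly, det_succ_row_zero]
  simp [Fin.sum_univ_succ, det_fin_three]
  ring

end Matrix

theorem det_middle_block_eq_zero_at_threshold (sM μM β b γ N₁ N₂ N₃ η : ℝ) (hbγ : b + γ ≠ 0) :
    -(b + γ) * ((sM / μM) * (η - β * ((N₂ - N₃) * γ + (N₁ - N₃) * b) / (b + γ))
        - (sM / μM) * (η + N₃ * β)) - β * sM / μM * (N₁ * b + N₂ * γ) = 0 := by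
  field_simp
  ring

theorem zero_eigenvalue_bifurcation_at_threshold_general
    (sM μM β b γ δ N₁ N₂ N₃ η cM eM cB eB μT : ℝ)
    (hμM : 0 < μM) (hb : 0 < b) (hγ : 0 < γ)
    (hμT : 0 < μT)
    (Tbar : ℝ)
    (J : Matrix (Fin 4) (Fin 4) ℝ)
    (hJ : J = !![-μM, 0, -β * sM / μM, 0;
                 0, -(b + γ), β * sM / μM, 0;
                 0, N₁ * b + N₂ * γ, δ - (sM / μM) * (η + N₃ * β), 0;
                 0, cM * Tbar / (eM * Tbar + 1), cB * Tbar / (eB * Tbar + 1), -μT])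
    (c₁ δ₀ : ℝ)
    (hc₁ : c₁ = (b + γ) + (sM / μM) * (N₃ * β + η) - δ)
    (hδ₀ : δ₀ = (sM / μM) * (η - β * ((N₂ - N₃) * γ + (N₁ - N₃) * b) / (b + γ)))
    (hthr : δ = δ₀) (hc₁pos : 0 < c₁) :
    (0 : ℝ) ∈ spectrum ℝ J ∧
    spectrum ℝ J = {0, -μM, -μT, -c₁} ∧
    -μM < 0 ∧ -μT < 0 ∧ -c₁ < 0 := by
  have hdet := det_middle_block_eq_zero_at_threshold sM μM β b γ N₁ N₂ N₃ η (by positivity)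
  rw [← hδ₀, ← hthr] at hdet
  have hspec : spectrum ℝ J = {0, -μM, -μT, -c₁} := by
    refine spectrum_eq_of_eval_charpoly_eq J _ _ _ _ fun x ↦ ?_
    rw [hJ, eval_charpoly_of_cols_zero_three_diagonal, hc₁]
    linear_combination (x + μM) * (x + μT) * hdet
  refine ⟨?_, hspec, by linarith, by linarith, by linarith⟩
  simp [hspec]

/-- If δ = δ₀ and c₁ > 0, then 0 is an eigenvalue of the Jacobian J at
the infection-free steady state (zero-eigenvalue bifurcation), and the remaining
three eigenvalues are the negative reals −μ_M, −μ_T and −c₁. -/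
theorem zero_eigenvalue_bifurcation_at_threshold
    (sM μM β b γ δ N₁ N₂ N₃ η sT cM eM cB eB μT : ℝ)
    (hsM : 0 < sM) (hμM : 0 < μM) (hβ : 0 < β) (hb : 0 < b) (hγ : 0 < γ)
    (hδ : 0 < δ) (hN₁ : 0 < N₁) (hN₂ : 0 < N₂) (hN₃ : 0 < N₃) (hη : 0 < η)
    (hsT : 0 < sT) (hcM : 0 < cM) (heM : 0 < eM) (hcB : 0 < cB) (heB : 0 < eB)
    (hμT : 0 < μT)
    (Tbar : ℝ) (hTbar : Tbar = sT / μT)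
    (J : Matrix (Fin 4) (Fin 4) ℝ)
    (hJ : J = !![-μM, 0, -β * sM / μM, 0;
                 0, -(b + γ), β * sM / μM, 0;
                 0, N₁ * b + N₂ * γ, δ - (sM / μM) * (η + N₃ * β), 0;
                 0, cM * Tbar / (eM * Tbar + 1), cB * Tbar / (eB * Tbar + 1), -μT])
    (c₁ δ₀ : ℝ)
    (hc₁ : c₁ = (b + γ) + (sM / μM) * (N₃ * β + η) - δ)
    (hδ₀ : δ₀ = (sM / μM) * (η - β * ((N₂ - N₃) * γ + (N₁ - N₃) * b) / (b + γ)))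
    (hthr : δ = δ₀) (hc₁pos : 0 < c₁) :
    (0 : ℝ) ∈ spectrum ℝ J ∧
    spectrum ℝ J = {0, -μM, -μT, -c₁} ∧
    -μM < 0 ∧ -μT < 0 ∧ -c₁ < 0 :=
  zero_eigenvalue_bifurcation_at_threshold_general sM μM β b γ δ N₁ N₂ N₃ η cM eM cB eB μT hμM hb hγ
    hμT Tbar J hJ c₁ δ₀ hc₁ hδ₀ hthr hc₁pos
end
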